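/- For every ω ∈ 𝒯 and every μ ∈ 𝒫, and for every probability measure ν on (𝕊 × 2ℕ)² whose two (𝕊 × 2ℕ)-marginals coincide and with ν̂ = μ, one has Î(ν) = I(μ) + H(ν | μ̄); consequently inf{ Î(ν) : ν a probability measure on (𝕊 × 2ℕ)² with ν̂ = μ } = I(μ), and the infimum is attained at ν = μ̄. -/

import Mathlib

open Filter Topology
open scoped BigOperators ENNReal

noncomputable section
namespace Copoly

/-- The number of elements of a finite type satisfying a predicate. -/
def cardOf {α : Type*} [Fintype α] (P : α → Prop) : ℕ :=
  (@Finset.filter _ P (Classical.decPred P) Finset.univ).card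

/-- A single step of the simple random walk. -/
def step (b : Bool) : ℤ := if b then 1 else -1

/-- The simple random walk path built from the increments `y`. -/
def walk (y : ℕ → Bool) (x : ℕ) : ℤ := ∑ i ∈ Finset.range x, step (y i)

/-- `sign (S x)`, with the convention `sign (S x) = sign (S (x-1))` when `S x = 0`. -/
def wsign (y : ℕ → Bool) : ℕ → ℤ
  | 0 => 1
  | x + 1 => if walk y (x + 1) = 0 then wsign y x else Int.sign (walk y (x + 1))

/-- Extension of a finite tuple of increments by `false`. -/
def ext {N : ℕ} (y : Fin N → Bool) : ℕ → Bool :=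
  fun i => if h : i < N then y ⟨i, h⟩ else false

/-- The partition function `Z_{N,ω,λ,h} = E[exp (λ ∑_{x=1}^N (ω_x + h) sign (S_x))]`,
written as the exact average over the `2^N` equally likely increment strings. -/
def Zpart (ω : ℕ → ℤ) (lam h : ℝ) (N : ℕ) : ℝ :=
  (1 / 2 : ℝ) ^ N * ∑ y : Fin N → Bool,
    Real.exp (lam * ∑ x ∈ Finset.Icc 1 N, ((ω x : ℝ) + h) * (wsign (ext y) x : ℝ))

/-- `ω` is centered and `2T`-periodic with `T ≥ 1`. -/
def IsPeriod (ω : ℕ → ℤ) (T : ℕ) : Prop :=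
  0 < T ∧ (∀ x, ω (x + 2 * T) = ω x) ∧ ∑ x ∈ Finset.Icc 1 (2 * T), ω x = 0

/-- The class `𝒯` of nontrivial centered periodic sequences with values in `{-1,1}`. -/
def memT (ω : ℕ → ℤ) : Prop :=
  (∀ x, ω x = 1 ∨ ω x = -1) ∧ (∃ T, IsPeriod ω T) ∧
    ¬ (∀ k : ℕ, 1 ≤ k → ω (2 * k - 1) * ω (2 * k) = -1)

/-- `T_ω`, the smallest (half-)period of `ω`. -/
def Tper (ω : ℕ → ℤ) : ℕ := sInf {T | IsPeriod ω T}

/-- The free energy `f_ω(λ,h)` (the limit defining it exists). -/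
def freeEnergy (ω : ℕ → ℤ) (lam h : ℝ) : ℝ :=
  limUnder atTop fun N : ℕ => Real.log (Zpart ω lam h N) / N

/-- `φ_ω(λ,h) = f_ω(λ,h) - λ h`. -/
def phiFE (ω : ℕ → ℤ) (lam h : ℝ) : ℝ := freeEnergy ω lam h - lam * h

/-- `ξ_{α,β} = ∑_{x=2a+1}^{2b} ω_x` for representatives `a ∈ α`, `b ∈ β` with `a < b`. -/
def xiM (T : ℕ) (ω : ℕ → ℤ) (α β : ZMod T) : ℤ :=
  ∑ x ∈ Finset.Icc (2 * α.val + 1)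
      (2 * (if α.val < β.val then β.val else β.val + T)), ω x

/-- `K(x) = P(η = x)`, the law of the first return time to `0` of the walk. -/
def Kret (x : ℕ) : ℝ :=
  if x = 0 then 0 else
    (1 / 2 : ℝ) ^ x * (cardOf fun y : Fin x → Bool =>
      walk (ext y) x = 0 ∧ ∀ z, 0 < z → z < x → walk (ext y) z ≠ 0 : ℕ)

/-- `p_{α,β} = P(η/2 ∈ β - α)`. -/
def pmat (T : ℕ) (α β : ZMod T) : ℝ :=
  ∑' n : ℕ, if (n : ZMod T) = β - α then Kret (2 * n) else 0

/-- `K_{α,β}(x) = P(η = x | η/2 ∈ β - α)`. -/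
def Kcond (T : ℕ) (α β : ZMod T) (x : ℕ) : ℝ :=
  if x % 2 = 0 ∧ ((x / 2 : ℕ) : ZMod T) = β - α then Kret x / pmat T α β else 0

/-- `Φ^{λ,h}_{α,β}(x) = log ((1 + exp (-2(λ ξ_{α,β} + λ h x)))/2)`. -/
def PhiM (T : ℕ) (ω : ℕ → ℤ) (lam h : ℝ) (α β : ZMod T) (x : ℕ) : ℝ :=
  Real.log ((1 + Real.exp (-2 * (lam * (xiM T ω α β : ℝ) + lam * h * x))) / 2)

/-- The matrix `A_{α,β}(b,λ,h)`. -/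
def Amat (T : ℕ) (ω : ℕ → ℤ) (b lam h : ℝ) (α β : ZMod T) : ℝ :=
  pmat T α β * ∑' x : ℕ, Kcond T α β x * Real.exp (PhiM T ω lam h α β x - b * x)

/-- The Perron–Frobenius eigenvalue of a matrix with positive entries: the unique
eigenvalue admitting a strictly positive eigenvector. -/
def PFeig {T : ℕ} (A : ZMod T → ZMod T → ℝ) : ℝ :=
  sSup {r : ℝ | ∃ v : ZMod T → ℝ, (∀ i, 0 < v i) ∧ ∀ i, (∑' j : ZMod T, A i j * v j) = r * v i}

/-- `Z(b,λ,h)`, the Perron–Frobenius eigenvalue of `A(b,λ,h)`. -/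
def Zeig (T : ℕ) (ω : ℕ → ℤ) (b lam h : ℝ) : ℝ := PFeig (Amat T ω b lam h)

open Classical in
/-- `b̃(λ,h)`: the unique `b > 0` solving `Z(b,λ,h) = 1` if it exists, and `0` otherwise. -/
def btilde (T : ℕ) (ω : ℕ → ℤ) (lam h : ℝ) : ℝ :=
  if hb : ∃ b > 0, Zeig T ω b lam h = 1 then hb.choose else 0

/-- The state space `𝕊 × 𝕊 × 2ℕ` (the last coordinate records the even excursion length). -/
abbrev Sp (T : ℕ) := ZMod T × ZMod T × ℕ

/-- First `𝕊`-marginal of `μ`. -/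
def marg1 {T : ℕ} (μ : Sp T → ℝ) (α : ZMod T) : ℝ := ∑' q : ZMod T × ℕ, μ (α, q.1, q.2)

/-- Second `𝕊`-marginal of `μ`. -/
def marg2 {T : ℕ} (μ : Sp T → ℝ) (β : ZMod T) : ℝ := ∑' q : ZMod T × ℕ, μ (q.1, β, q.2)

/-- The set `𝒫`: probability measures on `𝕊 × 𝕊 × 2ℕ` with equal `𝕊`-marginals,
supported on `{(α,β,x) : x ∈ 2ℕ, x/2 ∈ β - α}`. -/
def memP {T : ℕ} (μ : Sp T → ℝ) : Prop :=
  (∀ p, 0 ≤ μ p) ∧ HasSum μ 1 ∧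
    (∀ p : Sp T, μ p ≠ 0 →
      p.2.2 % 2 = 0 ∧ 2 ≤ p.2.2 ∧ ((p.2.2 / 2 : ℕ) : ZMod T) = p.2.1 - p.1) ∧
    ∀ γ, marg1 μ γ = marg2 μ γ

/-- The nonnegative summand `a log (a/c) - a + c` of relative entropy. -/
def klF (a c : ℝ) : ℝ := a * Real.log (a / c) - a + c

/-- Relative entropy `H(μ | ν) ∈ [0,∞]` of two probability measures on a countable space. -/
def Dkl {T : ℕ} (μ ν : Sp T → ℝ) : ℝ≥0∞ := ∑' p : Sp T, ENNReal.ofReal (klF (μ p) (ν p))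

/-- The rate functional `I(μ) = ∑ μ(α,β,x) log (μ(α,β,x)/(μ(α) p_{α,β} K_{α,β}(x))) ∈ [0,∞]`. -/
def Ifun (T : ℕ) (μ : Sp T → ℝ) : ℝ≥0∞ :=
  ∑' p : Sp T,
    ENNReal.ofReal (klF (μ p) (marg1 μ p.1 * pmat T p.1 p.2.1 * Kcond T p.1 p.2.1 p.2.2))

/-- `Q(μ) = ∑ Φ^{λ,h}_{α,β}(x) μ(α,β,x) - I(μ)`, with values in `[-∞,∞)`. -/
def Qfun (T : ℕ) (ω : ℕ → ℤ) (lam h : ℝ) (μ : Sp T → ℝ) : EReal :=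
  ((∑' p : Sp T, PhiM T ω lam h p.1 p.2.1 p.2.2 * μ p : ℝ) : EReal) - (Ifun T μ : EReal)

/-- The measure `μ_b^{λ,h}(α,β,x) = π(α) p_{α,β} K_{α,β}(x) exp(Φ(x) - bx) v_β/(Z v_α)`. -/
def muB (T : ℕ) (ω : ℕ → ℤ) (b lam h : ℝ) (π v : ZMod T → ℝ) (p : Sp T) : ℝ :=
  π p.1 * pmat T p.1 p.2.1 * Kcond T p.1 p.2.1 p.2.2 *
      Real.exp (PhiM T ω lam h p.1 p.2.1 p.2.2 - b * p.2.2) * v p.2.1 /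
    (Zeig T ω b lam h * v p.1)

/-- `v` is a strictly positive right Perron–Frobenius eigenvector of `A(b,λ,h)` and `π` is
the probability left eigenvector (with eigenvalue 1) of the associated stochastic matrix
`(A_{α,β} v_β / (Z v_α))`. -/
def IsPF (T : ℕ) (ω : ℕ → ℤ) (b lam h : ℝ) (π v : ZMod T → ℝ) : Prop :=
  (∀ i, 0 < v i) ∧
    (∀ i, (∑' j : ZMod T, Amat T ω b lam h i j * v j) = Zeig T ω b lam h * v i) ∧
    (∀ i, 0 ≤ π i) ∧ (∑' i : ZMod T, π i) = 1 ∧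
    ∀ j, (∑' i : ZMod T, π i * (Amat T ω b lam h i j * v j / (Zeig T ω b lam h * v i))) = π j

/-- `H̃(μ | ν)`: the difference of relative entropies
`H(μ | ν) - H(μ_1 | ν_1)`, with values in `[-∞,∞]`. -/
def Htil {T : ℕ} (μ ν : Sp T → ℝ) : EReal :=
  (Dkl μ ν : EReal) - ((∑' α : ZMod T, klF (marg1 μ α) (marg1 ν α) : ℝ) : EReal)

open Classical in
/-- `f(b) = ∑_{α,β,x} x μ_b^{λ,h}(α,β,x)` (defined through a choice of the
Perron–Frobenius data, on which it does not depend). -/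
def fmean (T : ℕ) (ω : ℕ → ℤ) (b lam h : ℝ) : ℝ :=
  if hpf : ∃ w : (ZMod T → ℝ) × (ZMod T → ℝ), IsPF T ω b lam h w.1 w.2 then
    ∑' p : Sp T, (p.2.2 : ℝ) * muB T ω b lam h hpf.choose.1 hpf.choose.2 p
  else 0

/-- `Φ̂_{α,β}(x)` from the large-`λ` asymptotics. -/
def PhiHat (T : ℕ) (ω : ℕ → ℤ) (M : ℝ) (α β : ZMod T) (x : ℕ) : ℝ :=
  -Real.log 2 +
    (if xiM T ω α β = -(x : ℤ) then Real.log (1 + Real.exp (2 * M * x)) else 0)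

/-- `Ẑ(M)`, the Perron–Frobenius eigenvalue of `(p_{α,β} ∑_x K_{α,β}(x) exp (Φ̂_{α,β}(x)))`. -/
def Zhat (T : ℕ) (ω : ℕ → ℤ) (M : ℝ) : ℝ :=
  PFeig fun α β : ZMod T => pmat T α β * ∑' x : ℕ, Kcond T α β x * Real.exp (PhiHat T ω M α β x)

/-- The successive return times to `0` of the walk (`sInf ∅ = 0` on the irrelevant
event that the walk does not return). -/
def eta : ℕ → (ℕ → Bool) → ℕ
  | 0, _ => 0
  | k + 1, y => sInf {x | eta k y < x ∧ walk y x = 0}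

/-- Probability measures on `𝕊 × 𝕊 × 2ℕ`, with the topology of weak convergence
(= pointwise convergence on a countable discrete space). -/
abbrev PM (T : ℕ) := {μ : Sp T → ℝ // (∀ p, 0 ≤ μ p) ∧ HasSum μ 1}

/-- The empirical measure `L_m` of `{(α_j, β_j, Δη_j)}_{j<m}` along the path `y`. -/
def LmFun (T : ℕ) (m : ℕ) (y : ℕ → Bool) (p : Sp T) : ℝ :=
  (cardOf fun j : Fin m =>
      ((eta j.val y / 2 : ℕ) : ZMod T) = p.1 ∧
        ((eta (j.val + 1) y / 2 : ℕ) : ZMod T) = p.2.1 ∧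
        eta (j.val + 1) y - eta j.val y = p.2.2 : ℕ) / (m : ℝ)

open Classical in
/-- `P(L_m ∈ A)`: the probability that the `m`-th return to `0` occurs (at some time `n`)
and the empirical measure `L_m` belongs to `A`, written via cylinder sets. -/
def Pevent (T : ℕ) (A : Set (PM T)) (m : ℕ) : ℝ :=
  ∑' n : ℕ, (1 / 2 : ℝ) ^ n *
    (cardOf fun y : Fin n → Bool =>
      eta m (ext y) = n ∧ (∀ j, j < m → eta j (ext y) < eta (j + 1) (ext y)) ∧
        ∃ hpm : (∀ p, 0 ≤ LmFun T m (ext y) p) ∧ HasSum (LmFun T m (ext y)) 1,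
          (⟨LmFun T m (ext y), hpm⟩ : PM T) ∈ A : ℕ)

open Classical in
/-- The rate functional on probability measures: `I(μ)` if `μ ∈ 𝒫` and `+∞` otherwise. -/
def IfullPM {T : ℕ} (μ : PM T) : ℝ≥0∞ := if memP μ.1 then Ifun T μ.1 else ⊤

open Classical in
/-- `log` with values in `[-∞,∞)`: `elog r = -∞` for `r ≤ 0`. -/
def elog (r : ℝ) : EReal := if r ≤ 0 then ⊥ else ((Real.log r : ℝ) : EReal)

/-- The space `(𝕊 × 2ℕ) × (𝕊 × 2ℕ)`. -/
abbrev W (T : ℕ) := (ZMod T × ℕ) × (ZMod T × ℕ)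

/-- The transition kernel `q((α,x),(α',x')) = p_{α,α'} K_{α,α'}(x')`. -/
def qker (T : ℕ) (w w' : ZMod T × ℕ) : ℝ := pmat T w.1 w'.1 * Kcond T w.1 w'.1 w'.2

/-- First marginal of a measure on `(𝕊 × 2ℕ)²`. -/
def nu1 {T : ℕ} (ν : W T → ℝ) (w : ZMod T × ℕ) : ℝ := ∑' w' : ZMod T × ℕ, ν (w, w')

/-- Second marginal of a measure on `(𝕊 × 2ℕ)²`. -/
def nu2 {T : ℕ} (ν : W T → ℝ) (w : ZMod T × ℕ) : ℝ := ∑' w' : ZMod T × ℕ, ν (w', w)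

/-- `ν̂(α,β,x) = ∑_z ν(α,z,β,x)`. -/
def nuHat {T : ℕ} (ν : W T → ℝ) (p : Sp T) : ℝ := ∑' z : ℕ, ν ((p.1, z), (p.2.1, p.2.2))

open Classical in
/-- `Î(ν) = H(ν | ν₁ ⊗ q)` if the two marginals of `ν` coincide, `+∞` otherwise. -/
def Ihat {T : ℕ} (ν : W T → ℝ) : ℝ≥0∞ :=
  if ∀ w, nu1 ν w = nu2 ν w then
    ∑' w : W T, ENNReal.ofReal (klF (ν w) (nu1 ν w.1 * qker T w.1 w.2))
  else ⊤

/-- Relative entropy `H(ν | ρ) ∈ [0,∞]` on `(𝕊 × 2ℕ)²`. -/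
def DklW {T : ℕ} (ν ρ : W T → ℝ) : ℝ≥0∞ := ∑' w : W T, ENNReal.ofReal (klF (ν w) (ρ w))

/-- `μ̄((α,x),(α',x')) = (∑_γ μ(γ,α,x) / ∑_{γ,z} μ(γ,α,z)) μ(α,α',x')`
(with the convention that the value is `0` when the denominator vanishes). -/
def mubar {T : ℕ} (μ : Sp T → ℝ) (w : W T) : ℝ :=
  ((∑' γ : ZMod T, μ (γ, w.1.1, w.1.2)) / marg2 μ w.1.1) * μ (w.1.1, w.2.1, w.2.2)

end Copoly

/-!
Since `ν̂ = μ`, both marginals of `ν` equal the `(β, x)`-marginal `m` of `μ`, and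
`q((α, z), (β, x)) = p_{α,β} K_{α,β}(x)` does not depend on `z`. Hence `Î(ν)` splits along the fibres
`{((α, z), (β, x)) : z ∈ ℕ}` over the points `(α, β, x)`, where `ν` has total mass `μ(α, β, x)` and
the reference measure `m(α, z) p_{α,β} K_{α,β}(x)` has total mass `μ(α) p_{α,β} K_{α,β}(x)`. On each
fibre the chain rule for relative entropy separates the entropy of the totals, which sums to `I(μ)`,
from the entropy relative to the reference measure renormalised to mass `μ(α, β, x)`, which is
`μ̄` on that fibre. So `Î(ν) = I(μ) + H(ν | μ̄) ≥ I(μ)`, with equality at `ν = μ̄`.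

The chain rule needs `p_{α,β} K_{α,β}(x) = K(x) > 0` on the support of `μ`: `K(x) > 0` is witnessed
by an excursion of `x/2` up-steps and `x/2` down-steps, and `p_{α,β}` is a convergent series
because the first-return events of different lengths are disjoint, so `∑ K ≤ 1`.
-/

namespace Copoly

lemma hasSum_prod_of_nonneg {α β : Type*} {f : α × β → ℝ} {g : α → ℝ} {a : ℝ} (hf : 0 ≤ f)
    (hfg : ∀ x, HasSum (fun y => f (x, y)) (g x)) (hg : HasSum g a) : HasSum f a := by
  have hs : Summable f := (summable_prod_of_nonneg hf).mpr
    ⟨fun x => (hfg x).summable, by simpa only [(hfg _).tsum_eq] using hg.summable⟩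
  exact hg.unique (hs.hasSum.prod_fiberwise hfg) ▸ hs.hasSum

section RelativeEntropy

lemma klF_zero_left (c : ℝ) : klF 0 c = c := by simp [klF]

lemma klF_self (a : ℝ) : klF a a = 0 := by
  rcases eq_or_ne a 0 with rfl | h
  · simp [klF]
  · simp [klF, div_self h]

lemma klF_nonneg {a c : ℝ} (ha : 0 ≤ a) (hc : 0 ≤ c) (hac : a ≠ 0 → 0 < c) : 0 ≤ klF a c := by
  rcases eq_or_ne a 0 with rfl | h
  · rwa [klF_zero_left]
  have hc := hac h
  have : klF a c = c * InformationTheory.klFun (a / c) := by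
    simp only [klF, InformationTheory.klFun]
    field_simp
    ring
  rw [this]
  exact mul_nonneg hc.le (InformationTheory.klFun_nonneg (by positivity))

lemma klF_mul_eq {a c M G Q : ℝ} (hM : 0 < M) (hG : 0 < G) (hQ : 0 < Q) (hac : a ≠ 0 → 0 < c) :
    klF a (c * Q) = klF a (c / M * G) + a * Real.log (G / (M * Q)) + (c * Q - c / M * G) := by
  rcases eq_or_ne a 0 with rfl | ha
  · simp only [klF_zero_left, zero_mul]
    ring
  have hc := hac ha
  have hsplit : a / (c * Q) = a / (c / M * G) * (G / (M * Q)) := by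
    field_simp
  simp only [klF]
  rw [hsplit, Real.log_mul (by positivity) (by positivity)]
  ring

lemma klF_div_mul_le {a c M G : ℝ} (ha : 0 ≤ a) (hac : a ≤ c) (hG : 0 < G) (hGM : G ≤ M) :
    klF a (c / M * G) ≤ a * Real.log (M / G) - a + c / M * G := by
  rcases eq_or_ne a 0 with rfl | ha'
  · simp [klF_zero_left]
  have hapos : 0 < a := ha.lt_of_ne' ha'
  have hc : 0 < c := hapos.trans_le hac
  have hM : 0 < M := hG.trans_le hGM
  have hlog : Real.log (a / (c / M * G)) ≤ Real.log (M / G) := by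
    refine Real.log_le_log (by positivity) ?_
    rw [show a / (c / M * G) = a / c * (M / G) by field_simp]
    exact mul_le_of_le_one_left (by positivity) ((div_le_one hc).mpr hac)
  simp only [klF]
  nlinarith [mul_le_mul_of_nonneg_left hlog ha]

/-- The chain rule for relative entropy, on one fibre. -/
theorem tsum_ofReal_klF_mul {ι : Type*} {g m : ι → ℝ} {G M Q : ℝ} (hg0 : ∀ z, 0 ≤ g z)
    (hgm : ∀ z, g z ≤ m z) (hg : HasSum g G) (hm : HasSum m M) (hQ : 0 ≤ Q)
    (hGQ : G ≠ 0 → 0 < Q) :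
    ∑' z, ENNReal.ofReal (klF (g z) (m z * Q)) =
      ENNReal.ofReal (klF G (M * Q)) + ∑' z, ENNReal.ofReal (klF (g z) (m z / M * G)) := by
  have hm0 : ∀ z, 0 ≤ m z := fun z => (hg0 z).trans (hgm z)
  rcases eq_or_ne G 0 with rfl | hG0
  · obtain rfl : g = 0 := (hasSum_zero_iff_of_nonneg hg0).mp hg
    simp only [Pi.zero_apply, klF_zero_left, mul_zero, ENNReal.ofReal_zero, tsum_zero, add_zero]
    rw [← ENNReal.ofReal_tsum_of_nonneg (fun z => mul_nonneg (hm0 z) hQ)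
      (hm.mul_right Q).summable, (hm.mul_right Q).tsum_eq]
  have hG : 0 < G := (hg.nonneg hg0).lt_of_ne' hG0
  have hQ' : 0 < Q := hGQ hG0
  have hGM : G ≤ M := hasSum_le hgm hg hm
  have hM : 0 < M := hG.trans_le hGM
  have hac : ∀ z, g z ≠ 0 → 0 < m z := fun z h => ((hg0 z).lt_of_ne' h).trans_le (hgm z)
  have hmG : HasSum (fun z => m z / M * G) G := by
    simpa [div_self hM.ne'] using (hm.div_const M).mul_right G
  have hb0 : ∀ z, 0 ≤ klF (g z) (m z / M * G) := fun z =>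
    klF_nonneg (hg0 z) (by have := hm0 z; positivity) fun h => by have := hac z h; positivity
  have hb : Summable fun z => klF (g z) (m z / M * G) :=
    .of_nonneg_of_le hb0 (fun z => klF_div_mul_le (hg0 z) (hgm z) hG hGM)
      (((hg.summable.mul_right _).sub hg.summable).add hmG.summable)
  have ha : HasSum (fun z => klF (g z) (m z * Q))
      (klF G (M * Q) + ∑' z, klF (g z) (m z / M * G)) := by
    convert (hb.hasSum.add (hg.mul_right (Real.log (G / (M * Q))))).add
      ((hm.mul_right Q).sub hmG) using 1
    · exact funext fun z => klF_mul_eq hM hG hQ' (hac z)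
    · simp only [klF]
      ring
  have ha0 : ∀ z, 0 ≤ klF (g z) (m z * Q) := fun z =>
    klF_nonneg (hg0 z) (by have := hm0 z; positivity) fun h => by have := hac z h; positivity
  rw [← ENNReal.ofReal_tsum_of_nonneg ha0 ha.summable, ha.tsum_eq,
    ENNReal.ofReal_add (klF_nonneg hG.le (by positivity) fun _ => by positivity) (tsum_nonneg hb0),
    ENNReal.ofReal_tsum_of_nonneg hb0 hb]

lemma DklW_self {T : ℕ} (ν : W T → ℝ) : DklW ν ν = 0 := by
  simp [DklW, klF_self]

end RelativeEntropy

section RandomWalk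

def IsFirstReturn (x : ℕ) (y : ℕ → Bool) : Prop :=
  walk y x = 0 ∧ ∀ z, 0 < z → z < x → walk y z ≠ 0

lemma walk_congr {y y' : ℕ → Bool} {x : ℕ} (h : ∀ i < x, y i = y' i) :
    walk y x = walk y' x :=
  Finset.sum_congr rfl fun i hi => by rw [h i (Finset.mem_range.mp hi)]

lemma ext_apply_of_lt {N : ℕ} (y : Fin N → Bool) {i : ℕ} (hi : i < N) : ext y i = y ⟨i, hi⟩ :=
  dif_pos hi

lemma cardOf_ext_succ {P : (ℕ → Bool) → Prop} {n : ℕ}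
    (hP : ∀ y y', (∀ i < n, y i = y' i) → (P y ↔ P y')) :
    cardOf (fun y : Fin (n + 1) → Bool => P (ext y)) =
      2 * cardOf (fun y : Fin n → Bool => P (ext y)) := by
  classical
  have hsnoc : ∀ (b : Bool) (y : Fin n → Bool),
      P (ext (Fin.snocEquiv (fun _ => Bool) (b, y))) ↔ P (ext y) := by
    refine fun b y => hP _ _ fun i hi => ?_
    rw [ext_apply_of_lt _ hi, ext_apply_of_lt _ (by omega)]
    exact Fin.snoc_castSucc (α := fun _ => Bool) (i := ⟨i, hi⟩) ..
  simp only [cardOf, Finset.card_filter]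
  rw [← (Fin.snocEquiv fun _ => Bool).sum_comp, Fintype.sum_prod_type]
  simp only [hsnoc, Fintype.sum_bool]
  ring

lemma cardOf_ext_of_le {P : (ℕ → Bool) → Prop} {x N : ℕ} (hxN : x ≤ N)
    (hP : ∀ y y', (∀ i < x, y i = y' i) → (P y ↔ P y')) :
    cardOf (fun y : Fin N → Bool => P (ext y)) =
      2 ^ (N - x) * cardOf (fun y : Fin x → Bool => P (ext y)) := by
  induction N, hxN using Nat.le_induction with
  | base => simp
  | succ n hxn ih =>
    rw [cardOf_ext_succ fun y y' h => hP y y' fun i hi => h i (by omega), ih,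
      Nat.sub_add_comm hxn, pow_succ]
    ring

lemma isFirstReturn_congr {x : ℕ} {y y' : ℕ → Bool} (h : ∀ i < x, y i = y' i) :
    IsFirstReturn x y ↔ IsFirstReturn x y' := by
  have hz : ∀ z ≤ x, walk y z = walk y' z := fun z hz => walk_congr fun i hi => h i (by omega)
  unfold IsFirstReturn
  refine and_congr (by rw [hz x le_rfl]) (forall_congr' fun z => ?_)
  exact ⟨fun H hz0 hzx => hz z hzx.le ▸ H hz0 hzx, fun H hz0 hzx => (hz z hzx.le).symm ▸ H hz0 hzx⟩

lemma Kret_eq_cardOf_div {x N : ℕ} (hxN : x ≤ N) :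
    Kret x = cardOf (fun y : Fin N → Bool => x ≠ 0 ∧ IsFirstReturn x (ext y)) / 2 ^ N := by
  rcases eq_or_ne x 0 with rfl | hx
  · simp [Kret, cardOf]
  rw [Kret, if_neg hx]
  change (1 / 2 : ℝ) ^ x * (cardOf fun y : Fin x → Bool => IsFirstReturn x (ext y) : ℕ) = _
  rw [cardOf_ext_of_le hxN fun y y' h => and_congr_right' (isFirstReturn_congr h)]
  simp only [ne_eq, hx, not_false_eq_true, true_and]
  rw [show (2 : ℝ) ^ N = 2 ^ (N - x) * 2 ^ x by rw [← pow_add, Nat.sub_add_cancel hxN]]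
  push_cast
  field_simp
  rw [mul_right_comm, ← mul_pow]
  norm_num

lemma sum_range_Kret_le_one (N : ℕ) : ∑ x ∈ Finset.range N, Kret x ≤ 1 := by
  classical
  let E : ℕ → Finset (Fin N → Bool) := fun x => {y | x ≠ 0 ∧ IsFirstReturn x (ext y)}
  have hdisj : (Finset.range N : Set ℕ).PairwiseDisjoint E := by
    intro x _ x' _ hne
    refine Finset.disjoint_left.mpr fun y hy hy' => ?_
    simp only [E, Finset.mem_filter, Finset.mem_univ, true_and] at hy hy'
    rcases lt_or_gt_of_ne hne with h | h
    · exact hy'.2.2 x (Nat.pos_of_ne_zero hy.1) h hy.2.1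
    · exact hy.2.2 x' (Nat.pos_of_ne_zero hy'.1) h hy'.2.1
  have hcard : ∑ x ∈ Finset.range N, (E x).card ≤ 2 ^ N := by
    rw [← Finset.card_biUnion hdisj]
    exact (Finset.card_le_univ _).trans (by simp)
  calc ∑ x ∈ Finset.range N, Kret x = ∑ x ∈ Finset.range N, ((E x).card : ℝ) / 2 ^ N :=
        Finset.sum_congr rfl fun x hx => by
          rw [Kret_eq_cardOf_div (Finset.mem_range.mp hx).le, cardOf]
          congr 3
          convert rfl
    _ ≤ 1 := by
        rw [← Finset.sum_div, div_le_one (by positivity)]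
        exact_mod_cast hcard

lemma Kret_nonneg (x : ℕ) : 0 ≤ Kret x := by
  unfold Kret; split <;> positivity

lemma summable_Kret : Summable Kret :=
  summable_of_sum_range_le Kret_nonneg sum_range_Kret_le_one

lemma walk_decide_lt_of_le {k z : ℕ} (hz : z ≤ k) : walk (fun i => decide (i < k)) z = z := by
  rw [walk, Finset.sum_congr rfl fun i hi => show step (decide (i < k)) = 1 by
    simp [step, (Finset.mem_range.mp hi).trans_le hz]]
  simp

lemma walk_decide_lt_add (k j : ℕ) :
    walk (fun i => decide (i < k)) (k + j) = k - j := by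
  rw [walk, Finset.sum_range_add, ← walk, walk_decide_lt_of_le le_rfl,
    Finset.sum_congr rfl fun i _ => show step (decide (k + i < k)) = -1 by simp [step]]
  simp [sub_eq_add_neg]

lemma Kret_pos {x : ℕ} (hev : x % 2 = 0) (hx : 2 ≤ x) : 0 < Kret x := by
  obtain ⟨k, rfl⟩ : ∃ k, x = k + k := ⟨x / 2, by omega⟩
  let y : Fin (k + k) → Bool := fun i => decide (i.val < k)
  have hy : IsFirstReturn (k + k) (ext y) := by
    rw [isFirstReturn_congr (y' := fun i => decide (i < k)) fun i hi => ext_apply_of_lt y hi]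
    refine ⟨by rw [walk_decide_lt_add k k, sub_self], fun z hz0 hzx => ?_⟩
    rcases le_or_gt z k with hzk | hzk
    · rw [walk_decide_lt_of_le hzk]; exact_mod_cast hz0.ne'
    · obtain ⟨j, rfl⟩ := Nat.exists_eq_add_of_le hzk.le
      rw [walk_decide_lt_add]; omega
  have hcard : 0 < cardOf fun y : Fin (k + k) → Bool => IsFirstReturn (k + k) (ext y) := by
    classical
    exact Finset.card_pos.mpr ⟨y, by simp [hy]⟩
  rw [Kret, if_neg (by omega)]
  exact mul_pos (by positivity) (by exact_mod_cast hcard)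

end RandomWalk

lemma pmat_nonneg (T : ℕ) (α β : ZMod T) : 0 ≤ pmat T α β :=
  tsum_nonneg fun n => by split_ifs <;> simp [Kret_nonneg]

lemma Kret_le_pmat {T : ℕ} {α β : ZMod T} {n : ℕ} (hn : (n : ZMod T) = β - α) :
    Kret (2 * n) ≤ pmat T α β := by
  have hnonneg : ∀ n : ℕ, 0 ≤ if (n : ZMod T) = β - α then Kret (2 * n) else 0 :=
    fun n => by split_ifs <;> simp [Kret_nonneg]
  have hsum : Summable fun n : ℕ => if (n : ZMod T) = β - α then Kret (2 * n) else 0 :=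
    .of_nonneg_of_le hnonneg (fun n => by split_ifs <;> simp [Kret_nonneg])
      (summable_Kret.comp_injective (i := fun n => 2 * n) fun a b h => by simp at h; omega)
  rw [pmat]
  simpa [hn] using hsum.le_tsum n fun j _ => hnonneg j

lemma Kcond_nonneg (T : ℕ) (α β : ZMod T) (x : ℕ) : 0 ≤ Kcond T α β x := by
  unfold Kcond
  split_ifs
  exacts [div_nonneg (Kret_nonneg x) (pmat_nonneg T α β), le_rfl]

lemma pmat_mul_Kcond_pos {T : ℕ} {α β : ZMod T} {x : ℕ} (hev : x % 2 = 0) (hx : 2 ≤ x)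
    (hc : ((x / 2 : ℕ) : ZMod T) = β - α) : 0 < pmat T α β * Kcond T α β x := by
  have hK := Kret_pos hev hx
  have hKp : Kret x ≤ pmat T α β := by
    simpa [Nat.mul_div_cancel' (Nat.dvd_of_mod_eq_zero hev)] using Kret_le_pmat hc
  have hp : pmat T α β ≠ 0 := (hK.trans_le hKp).ne'
  rwa [Kcond, if_pos ⟨hev, hc⟩, mul_div_cancel₀ _ hp]

def marg23 {T : ℕ} (μ : Sp T → ℝ) (w : ZMod T × ℕ) : ℝ := ∑' γ : ZMod T, μ (γ, w.1, w.2)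

def spProdNatEquivW (T : ℕ) : Sp T × ℕ ≃ W T where
  toFun u := ((u.1.1, u.2), (u.1.2.1, u.1.2.2))
  invFun w := ((w.1.1, w.2.1, w.2.2), w.1.2)
  left_inv _ := rfl
  right_inv _ := rfl

lemma tsum_W_eq_tsum_tsum {T : ℕ} (F : W T → ℝ≥0∞) :
    ∑' w, F w = ∑' p : Sp T, ∑' z : ℕ, F ((p.1, z), (p.2.1, p.2.2)) := by
  rw [← (spProdNatEquivW T).tsum_eq, ENNReal.tsum_prod']
  rfl

section Marginals

variable {T : ℕ} {μ : Sp T → ℝ}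

lemma hasSum_marg23 (hμ : Summable μ) (α : ZMod T) :
    HasSum (fun z => marg23 μ (α, z)) (marg2 μ α) := by
  have hs : Summable fun q : ZMod T × ℕ => μ (q.1, α, q.2) :=
    hμ.comp_injective fun a b h => by simp only [Prod.mk.injEq] at h; exact Prod.ext h.1 h.2.2
  refine ((Equiv.prodComm ℕ (ZMod T)).hasSum_iff.mpr hs.hasSum).prod_fiberwise fun z => ?_
  exact (hμ.comp_injective fun a b h => by simpa using h).hasSum

lemma le_marg1 (hμ0 : ∀ p, 0 ≤ μ p) (hμ : Summable μ) (p : Sp T) : μ p ≤ marg1 μ p.1 :=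
  (hμ.comp_injective (i := fun q : ZMod T × ℕ => (p.1, q.1, q.2)) fun a b h => by
      simp only [Prod.mk.injEq] at h; exact Prod.ext h.2.1 h.2.2).le_tsum
    (p.2.1, p.2.2) fun _ _ => hμ0 _

lemma memP.eq_zero_of_marg2_eq_zero (hμ : memP μ) {α : ZMod T} (hα : marg2 μ α = 0)
    (β : ZMod T) (x : ℕ) : μ (α, β, x) = 0 :=
  le_antisymm ((le_marg1 hμ.1 hμ.2.1.summable (α, β, x)).trans_eq (hμ.2.2.2 α ▸ hα)) (hμ.1 _)

lemma mubar_nonneg (hμ0 : ∀ p, 0 ≤ μ p) (w : W T) : 0 ≤ mubar μ w :=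
  mul_nonneg (div_nonneg (tsum_nonneg fun _ => hμ0 _) (tsum_nonneg fun _ => hμ0 _)) (hμ0 _)

lemma hasSum_mubar_fiber (hμ : memP μ) (α β : ZMod T) (x : ℕ) :
    HasSum (fun z => mubar μ ((α, z), (β, x))) (μ (α, β, x)) := by
  rcases eq_or_ne (marg2 μ α) 0 with hα | hα
  · simp [mubar, hμ.eq_zero_of_marg2_eq_zero hα, hasSum_zero]
  · have h := ((hasSum_marg23 hμ.2.1.summable α).div_const (marg2 μ α)).mul_right (μ (α, β, x))
    rwa [div_self hα, one_mul] at h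

lemma nuHat_mubar (hμ : memP μ) (p : Sp T) : nuHat (mubar μ) p = μ p :=
  (hasSum_mubar_fiber hμ p.1 p.2.1 p.2.2).tsum_eq

lemma hasSum_mubar (hμ : memP μ) : HasSum (mubar μ) 1 :=
  (spProdNatEquivW T).hasSum_iff.mp <|
    hasSum_prod_of_nonneg (fun _ => mubar_nonneg hμ.1 _)
      (fun p => hasSum_mubar_fiber hμ p.1 p.2.1 p.2.2) hμ.2.1

lemma nu1_mubar (hμ : memP μ) (w : ZMod T × ℕ) : nu1 (mubar μ) w = marg23 μ w := by
  obtain ⟨α, z⟩ := w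
  have hmarg : nu1 (mubar μ) (α, z) = marg23 μ (α, z) / marg2 μ α * marg1 μ α := by
    unfold nu1 mubar marg1
    rw [← tsum_mul_left]
    rfl
  rw [hmarg, hμ.2.2.2 α]
  rcases eq_or_ne (marg2 μ α) 0 with hα | hα
  · have hle := le_hasSum (hasSum_marg23 hμ.2.1.summable α) z
      fun _ _ => tsum_nonneg fun _ => hμ.1 _
    rw [hα] at hle
    simp [hα, le_antisymm hle (tsum_nonneg fun _ => hμ.1 _)]
  · exact div_mul_cancel₀ _ hα

variable {ν : W T → ℝ}

lemma hasSum_fiber_of_nuHat_eq (hν : Summable ν) (hνμ : ∀ p, nuHat ν p = μ p)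
    (α β : ZMod T) (x : ℕ) : HasSum (fun z => ν ((α, z), (β, x))) (μ (α, β, x)) :=
  hνμ (α, β, x) ▸ (hν.comp_injective fun a b h => by simpa using h).hasSum

lemma nu2_eq_marg23 (hν : Summable ν) (hνμ : ∀ p, nuHat ν p = μ p) (w : ZMod T × ℕ) :
    nu2 ν w = marg23 μ w := by
  obtain ⟨β, x⟩ := w
  refine ((hν.comp_injective fun a b h => by simpa using h).tsum_prod'
    fun α => (hasSum_fiber_of_nuHat_eq hν hνμ α β x).summable).trans ?_
  exact tsum_congr fun α => (hasSum_fiber_of_nuHat_eq hν hνμ α β x).tsum_eq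

lemma le_nu1 (hν0 : ∀ w, 0 ≤ ν w) (hν : Summable ν) (w w' : ZMod T × ℕ) : ν (w, w') ≤ nu1 ν w :=
  (hν.comp_injective fun a b h => by simpa using h).le_tsum w' fun _ _ => hν0 _

lemma nu1_mubar_eq_nu2 (hμ : memP μ) (w : ZMod T × ℕ) : nu1 (mubar μ) w = nu2 (mubar μ) w := by
  rw [nu1_mubar hμ, nu2_eq_marg23 (hasSum_mubar hμ).summable (nuHat_mubar hμ)]

end Marginals

theorem Ihat_eq_Ifun_add_DklW {T : ℕ} {μ : Sp T → ℝ} (hμ : memP μ) {ν : W T → ℝ}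
    (hν0 : ∀ w, 0 ≤ ν w) (hν : Summable ν) (hνm : ∀ w, nu1 ν w = nu2 ν w)
    (hνμ : ∀ p, nuHat ν p = μ p) :
    Ihat ν = Ifun T μ + DklW ν (mubar μ) := by
  have hnu1 : ∀ w, nu1 ν w = marg23 μ w := fun w => (hνm w).trans (nu2_eq_marg23 hν hνμ w)
  obtain ⟨-, hμ1, hsupp, hmarg⟩ := hμ
  rw [Ihat, if_pos hνm, tsum_W_eq_tsum_tsum, Ifun, DklW, tsum_W_eq_tsum_tsum, ← ENNReal.tsum_add]
  refine tsum_congr fun ⟨α, β, x⟩ => ?_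
  simp only [hnu1, qker]
  rw [mul_assoc, hmarg α]
  refine tsum_ofReal_klF_mul (fun z => hν0 _) (fun z => (le_nu1 hν0 hν _ _).trans_eq (hnu1 _))
    (hasSum_fiber_of_nuHat_eq hν hνμ α β x) (hasSum_marg23 hμ1.summable α)
    (mul_nonneg (pmat_nonneg T α β) (Kcond_nonneg T α β x)) fun hp => ?_
  obtain ⟨hev, hx, hc⟩ := hsupp _ hp
  exact pmat_mul_Kcond_pos hev hx hc

theorem stmt14_general (ω : ℕ → ℤ) (μ : Sp (Tper ω) → ℝ) (hμ : memP μ) :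
    (∀ ν : W (Tper ω) → ℝ, (∀ w, 0 ≤ ν w) → HasSum ν 1 →
        (∀ w, nu1 ν w = nu2 ν w) → (∀ p, nuHat ν p = μ p) →
        Ihat ν = Ifun (Tper ω) μ + DklW ν (mubar μ)) ∧
      (⨅ ν : {ν : W (Tper ω) → ℝ //
          (∀ w, 0 ≤ ν w) ∧ HasSum ν 1 ∧ ∀ p, nuHat ν p = μ p},
        Ihat ν.1) = Ifun (Tper ω) μ ∧
      (∀ w, 0 ≤ mubar μ w) ∧ HasSum (mubar μ) 1 ∧ (∀ p, nuHat (mubar μ) p = μ p) ∧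
      Ihat (mubar μ) = Ifun (Tper ω) μ := by
  have hmubar : Ihat (mubar μ) = Ifun (Tper ω) μ := by
    rw [Ihat_eq_Ifun_add_DklW hμ (mubar_nonneg hμ.1) (hasSum_mubar hμ).summable
      (nu1_mubar_eq_nu2 hμ) (nuHat_mubar hμ), DklW_self, add_zero]
  refine ⟨fun ν hν0 hν1 => Ihat_eq_Ifun_add_DklW hμ hν0 hν1.summable, le_antisymm ?_ ?_,
    mubar_nonneg hμ.1, hasSum_mubar hμ, nuHat_mubar hμ, hmubar⟩
  · exact iInf_le_of_le ⟨mubar μ, mubar_nonneg hμ.1, hasSum_mubar hμ, nuHat_mubar hμ⟩ hmubar.le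
  · refine le_iInf fun ⟨ν, hν0, hν1, hνμ⟩ => ?_
    by_cases hνm : ∀ w, nu1 ν w = nu2 ν w
    · exact (Ihat_eq_Ifun_add_DklW hμ hν0 hν1.summable hνm hνμ).symm ▸ le_self_add
    · simp [Ihat, if_neg hνm]

/-- for `μ ∈ 𝒫` and every probability measure `ν` on `(𝕊 × 2ℕ)²` with equal
marginals and `ν̂ = μ`, `Î(ν) = I(μ) + H(ν | μ̄)`; hence
`inf { Î(ν) : ν̂ = μ } = I(μ)`, attained at `ν = μ̄`. -/
theorem stmt14 (ω : ℕ → ℤ) (hω : memT ω) (μ : Sp (Tper ω) → ℝ) (hμ : memP μ) :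
    (∀ ν : W (Tper ω) → ℝ, (∀ w, 0 ≤ ν w) → HasSum ν 1 →
        (∀ w, nu1 ν w = nu2 ν w) → (∀ p, nuHat ν p = μ p) →
        Ihat ν = Ifun (Tper ω) μ + DklW ν (mubar μ)) ∧
      (⨅ ν : {ν : W (Tper ω) → ℝ //
          (∀ w, 0 ≤ ν w) ∧ HasSum ν 1 ∧ ∀ p, nuHat ν p = μ p},
        Ihat ν.1) = Ifun (Tper ω) μ ∧
      (∀ w, 0 ≤ mubar μ w) ∧ HasSum (mubar μ) 1 ∧ (∀ p, nuHat (mubar μ) p = μ p) ∧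
      Ihat (mubar μ) = Ifun (Tper ω) μ :=
  stmt14_general ω μ hμ

end Copoly
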